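/- arXiv:2212.14106 — 4 statements merged into one kernel-verified Lean document; each statement's English description precedes it below -/
import Mathlib

section
/- Under the linearization I_i(x + δ_i) = I_i(x) + H_i(x)ᵀδ_i, the minimum over (δ₁,…,δ_m) ∈ N⁺ of Σ_{i=1}^m l_i I_i(x + α_i δ_i) (with the convex-combination structure of N⁺) equals Σ_{i=1}^m l_i I_i(x) - ε · max_{t ∈ {1,…,m}} ‖H_t(x)‖₂. Consequently, for any perturbation set N with N⁻ ⊆ N ⊆ N⁺, the minimum over N of the linearized objective equals the same value Σ l_i I_i(x) - ε max_t ‖H_t(x)‖₂. -/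
/-!
By Cauchy–Schwarz each term satisfies `l_i ⟪H_i, α_i δ_i⟫ ≥ -α_i ε ‖H_i‖ ≥ -α_i ε max_t ‖H_t‖`,
and the weights sum to one, so over `N⁺` the linearized objective is at least
`Σ l_i I_i - ε max_t ‖H_t‖`. The bound is attained already in `N⁻`, by the perturbation
`δ_t = -l_t ε H_t / ‖H_t‖` at a maximizing index `t`; hence every `N` between `N⁻` and `N⁺`
has the same minimum.
-/

open scoped RealInnerProductSpace

section Perturbation

variable {ι E : Type*} [NormedAddCommGroup E] [InnerProductSpace ℝ E]

theorem neg_mul_norm_le_mul_inner {s ε : ℝ} (hs : |s| ≤ 1) (h : E) {δ : E} (hδ : ‖δ‖ ≤ ε) :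
    -(ε * ‖h‖) ≤ s * ⟪h, δ⟫ := by
  refine neg_le_of_abs_le ?_
  calc |s * ⟪h, δ⟫| = |s| * |⟪h, δ⟫| := abs_mul _ _
    _ ≤ 1 * (‖h‖ * ‖δ‖) := by gcongr; exact abs_real_inner_le_norm _ _
    _ ≤ ε * ‖h‖ := by rw [one_mul, mul_comm]; gcongr

theorem exists_norm_le_mul_inner_eq {s ε : ℝ} (hs : |s| = 1) (hε : 0 ≤ ε) (h : E) :
    ∃ δ : E, ‖δ‖ ≤ ε ∧ s * ⟪h, δ⟫ = -(ε * ‖h‖) := by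
  rcases eq_or_ne h 0 with rfl | hh
  · exact ⟨0, by simpa using hε, by simp⟩
  have hs2 : s * s = 1 := by rw [← abs_mul_abs_self, hs, one_mul]
  have hnorm : ‖h‖ ≠ 0 := norm_ne_zero_iff.mpr hh
  refine ⟨(-(s * ε / ‖h‖)) • h, le_of_eq ?_, ?_⟩
  · rw [norm_smul, norm_neg, Real.norm_eq_abs, abs_div, abs_mul, hs, abs_of_nonneg hε,
      abs_norm, one_mul, div_mul_cancel₀ _ hnorm]
  · rw [real_inner_smul_right, real_inner_self_eq_norm_sq]
    field_simp
    rw [sq, hs2, one_mul]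

/-- `N⁻` -/
def perturbMinus (ε : ℝ) : Set (ι → E) :=
  {d | ∃ i : ι, ‖d i‖ ≤ ε ∧ ∀ t : ι, t ≠ i → d t = 0}

/-- `N⁺` -/
def perturbPlus [Fintype ι] (ε : ℝ) : Set (ι → E) :=
  {d | ∃ (α : ι → ℝ) (δ : ι → E),
    (∑ i, α i) = 1 ∧ (∀ i, 0 ≤ α i) ∧ (∀ i, ‖δ i‖ ≤ ε) ∧ ∀ i, d i = α i • δ i}

theorem perturbMinus_subset_perturbPlus [Fintype ι] [DecidableEq ι] {ε : ℝ} (hε : 0 ≤ ε) :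
    (perturbMinus ε : Set (ι → E)) ⊆ perturbPlus ε := by
  rintro d ⟨i, hdi, hzero⟩
  refine ⟨Pi.single i 1, d, by simp, fun j => ?_, fun j => ?_, fun j => ?_⟩
  · by_cases h : j = i <;> simp [h]
  · by_cases h : j = i
    · exact h ▸ hdi
    · simpa [hzero j h] using hε
  · by_cases h : j = i
    · simp [h]
    · simp [h, hzero j h]

theorem le_sum_mul_of_sum_eq_one [Fintype ι] {α c : ι → ℝ} {b : ℝ} (hα : ∑ i, α i = 1)
    (hα₀ : ∀ i, 0 ≤ α i) (hc : ∀ i, b ≤ c i) : b ≤ ∑ i, α i * c i :=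
  calc b = ∑ i, α i * b := by rw [← Finset.sum_mul, hα, one_mul]
    _ ≤ ∑ i, α i * c i := Finset.sum_le_sum fun i _ => mul_le_mul_of_nonneg_left (hc i) (hα₀ i)

theorem neg_mul_le_sum_mul_inner_of_mem_perturbPlus [Fintype ι] {ε M : ℝ} {l : ι → ℝ}
    (hl : ∀ i, |l i| ≤ 1) {H : ι → E} (hM : ∀ i, ‖H i‖ ≤ M) {d : ι → E}
    (hd : d ∈ perturbPlus ε) : -(ε * M) ≤ ∑ i, l i * ⟪H i, d i⟫ := by
  obtain ⟨α, δ, hα, hα₀, hδ, hd⟩ := hd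
  have hterm : ∀ i, l i * ⟪H i, d i⟫ = α i * (l i * ⟪H i, δ i⟫) := fun i => by
    rw [hd, real_inner_smul_right]; ring
  simp_rw [hterm]
  refine le_sum_mul_of_sum_eq_one hα hα₀ fun i => ?_
  calc -(ε * M) ≤ -(ε * ‖H i‖) :=
        neg_le_neg (mul_le_mul_of_nonneg_left (hM i) ((norm_nonneg _).trans (hδ i)))
    _ ≤ l i * ⟪H i, δ i⟫ := neg_mul_norm_le_mul_inner (hl i) _ (hδ i)

theorem exists_mem_perturbMinus_sum_mul_inner_eq [Fintype ι] [DecidableEq ι] {ε : ℝ}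
    (hε : 0 ≤ ε) {l : ι → ℝ} (H : ι → E) {t : ι} (ht : |l t| = 1) :
    ∃ d ∈ (perturbMinus ε : Set (ι → E)), ∑ i, l i * ⟪H i, d i⟫ = -(ε * ‖H t‖) := by
  obtain ⟨δ, hδ, hval⟩ := exists_norm_le_mul_inner_eq ht hε (H t)
  refine ⟨Pi.single t δ, ⟨t, by simpa using hδ, fun i hi => Pi.single_eq_of_ne hi _⟩, ?_⟩
  rw [Fintype.sum_eq_single t fun i hi => by simp [Pi.single_eq_of_ne hi], Pi.single_eq_same,
    hval]

end Perturbation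

theorem csInf_eq_of_le_of_mem_subset {α : Type*} {f : α → ℝ} {A N B : Set α} {v : ℝ}
    (hAN : A ⊆ N) (hNB : N ⊆ B) (hle : ∀ x ∈ B, v ≤ f x) (hv : ∃ x ∈ A, f x = v) :
    sInf {r | ∃ x ∈ N, r = f x} = v := by
  obtain ⟨x, hxA, rfl⟩ := hv
  exact IsLeast.csInf_eq ⟨⟨x, hAN hxA, rfl⟩, by rintro _ ⟨y, hy, rfl⟩; exact hle y (hNB hy)⟩

/-- Minimum of the linearized objective over `N⁺` equals
`Σ l_i I_i(x) - ε max_t ‖H_t(x)‖₂`, and consequently the same value is attained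
as minimum over any perturbation set `N` with `N⁻ ⊆ N ⊆ N⁺`. -/
theorem min_linearized_over_Nplus_and_sandwich
    {n m : ℕ} (hm : 0 < m) (ε : ℝ) (hε : 0 < ε)
    (l : Fin m → ℝ) (hl : ∀ i, l i = 1 ∨ l i = -1)
    (I : Fin m → ℝ) (H : Fin m → EuclideanSpace ℝ (Fin n))
    (Nminus Nplus : Set (Fin m → EuclideanSpace ℝ (Fin n)))
    (hNminus : Nminus = {d | ∃ i : Fin m, ‖d i‖ ≤ ε ∧ ∀ t : Fin m, t ≠ i → d t = 0})
    (hNplus : Nplus = {d | ∃ (α : Fin m → ℝ) (δ : Fin m → EuclideanSpace ℝ (Fin n)),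
        (∑ i, α i) = 1 ∧ (∀ i, 0 ≤ α i) ∧ (∀ i, ‖δ i‖ ≤ ε) ∧ ∀ i, d i = α i • δ i}) :
    sInf {r : ℝ | ∃ d ∈ Nplus, r = ∑ i, l i * (I i + ⟪H i, d i⟫)} =
      (∑ i, l i * I i) -
        ε * Finset.univ.sup' (Finset.univ_nonempty_iff.mpr
          (Fin.pos_iff_nonempty.mp hm)) (fun t => ‖H t‖) ∧
    ∀ N : Set (Fin m → EuclideanSpace ℝ (Fin n)), Nminus ⊆ N → N ⊆ Nplus →
      sInf {r : ℝ | ∃ d ∈ N, r = ∑ i, l i * (I i + ⟪H i, d i⟫)} =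
        (∑ i, l i * I i) -
          ε * Finset.univ.sup' (Finset.univ_nonempty_iff.mpr
            (Fin.pos_iff_nonempty.mp hm)) (fun t => ‖H t‖) := by
  change Nminus = perturbMinus ε at hNminus
  change Nplus = perturbPlus ε at hNplus
  subst hNminus hNplus
  set M := Finset.univ.sup' _ fun t => ‖H t‖
  obtain ⟨t, -, hMt⟩ : ∃ t ∈ Finset.univ, M = ‖H t‖ := Finset.exists_mem_eq_sup' _ _
  have habs : ∀ i, |l i| = 1 := fun i => by rcases hl i with h | h <;> simp [h]
  have hsplit : ∀ d : Fin m → EuclideanSpace ℝ (Fin n),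
      ∑ i, l i * (I i + ⟪H i, d i⟫) = ∑ i, l i * I i + ∑ i, l i * ⟪H i, d i⟫ := fun d => by
    simp only [mul_add, Finset.sum_add_distrib]
  have hle : ∀ d ∈ perturbPlus ε, ∑ i, l i * I i - ε * M ≤ ∑ i, l i * (I i + ⟪H i, d i⟫) :=
    fun d hd => by
      rw [hsplit, sub_eq_add_neg]
      gcongr
      exact neg_mul_le_sum_mul_inner_of_mem_perturbPlus (fun i => (habs i).le)
        (fun i => Finset.le_sup' (fun t => ‖H t‖) (Finset.mem_univ i)) hd
  have hattained :
      ∃ d ∈ perturbMinus ε, ∑ i, l i * (I i + ⟪H i, d i⟫) = ∑ i, l i * I i - ε * M := by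
    obtain ⟨d, hd, hval⟩ := exists_mem_perturbMinus_sum_mul_inner_eq hε.le H (habs t)
    exact ⟨d, hd, by rw [hsplit, hval, hMt, sub_eq_add_neg]⟩
  have hsandwich : ∀ N, perturbMinus ε ⊆ N → N ⊆ perturbPlus ε →
      sInf {r : ℝ | ∃ d ∈ N, r = ∑ i, l i * (I i + ⟪H i, d i⟫)} = ∑ i, l i * I i - ε * M :=
    fun N hN₁ hN₂ => csInf_eq_of_le_of_mem_subset hN₁ hN₂ hle hattained
  exact ⟨hsandwich _ (perturbMinus_subset_perturbPlus hε.le) subset_rfl, hsandwich⟩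
end

section
/- Suppose a nonincreasing sequence of targets t^(k) satisfies h_low - ε ≤ t^(k) for all k, t^(1) ≤ h_up, and at each of i_k 'successful' iterations the target decreases by at least κ₂ ε² > 0 (and does not increase otherwise). Then the number of successful iterations satisfies i_k ≤ ⌈(h_up - h_low + ε)/(κ₂ ε²)⌉. -/
/-- Iteration complexity: a nonincreasing target sequence bounded below by
`h_low - ε`, starting at `t⁽¹⁾ ≤ h_up`, that decreases by at least `κ₂ ε²` on each
successful iteration, admits at most `⌈(h_up - h_low + ε)/(κ₂ ε²)⌉` successful
iterations. -/
theorem trust_region_iteration_complexity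
    (t : ℕ → ℝ) (hlow hup ε κ₂ : ℝ)
    (hε : 0 < ε) (hκ₂ : 0 < κ₂) (hlh : hlow ≤ hup)
    (hmono : ∀ k : ℕ, t (k + 1) ≤ t k)
    (hbound : ∀ k : ℕ, hlow - ε ≤ t k)
    (hinit : t 1 ≤ hup)
    (S : Finset ℕ) (hS1 : ∀ s ∈ S, 1 ≤ s)
    (hdec : ∀ s ∈ S, t (s + 1) ≤ t s - κ₂ * ε ^ 2) :
    S.card ≤ ⌈(hup - hlow + ε) / (κ₂ * ε ^ 2)⌉₊ := by
  have hpos : 0 < κ₂ * ε ^ 2 := by positivity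
  have key : ∀ n : ℕ, κ₂ * ε ^ 2 * (S.filter (fun s => s < n)).card ≤ t 1 - t (max n 1) := by
    intro n
    induction n with
    | zero =>
      simp
    | succ n ih =>
      have hmax : max (n + 1) 1 = n + 1 := by omega
      rw [hmax]
      by_cases hn : n ∈ S
      · have h1 : 1 ≤ n := hS1 n hn
        have hmax' : max n 1 = n := by omega
        rw [hmax'] at ih
        have hcard : (S.filter (fun s => s < n + 1)).card
            = (S.filter (fun s => s < n)).card + 1 := by
          have : S.filter (fun s => s < n + 1)
              = insert n (S.filter (fun s => s < n)) := by
            ext x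
            simp only [Finset.mem_filter, Finset.mem_insert]
            constructor
            · rintro ⟨hx, hlt⟩
              rcases Nat.lt_succ_iff_lt_or_eq.mp hlt with h | h
              · exact Or.inr ⟨hx, h⟩
              · exact Or.inl h
            · rintro (rfl | ⟨hx, hlt⟩)
              · exact ⟨hn, Nat.lt_succ_self _⟩
              · exact ⟨hx, Nat.lt_succ_of_lt hlt⟩
          rw [this, Finset.card_insert_of_notMem (by simp)]
        rw [hcard]
        have hd := hdec n hn
        push_cast
        nlinarith
      · have hcard : (S.filter (fun s => s < n + 1)).card
            = (S.filter (fun s => s < n)).card := by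
          congr 1
          ext x
          simp only [Finset.mem_filter]
          constructor
          · rintro ⟨hx, hlt⟩
            refine ⟨hx, ?_⟩
            rcases Nat.lt_succ_iff_lt_or_eq.mp hlt with h | rfl
            · exact h
            · exact absurd hx hn
          · rintro ⟨hx, hlt⟩
            exact ⟨hx, Nat.lt_succ_of_lt hlt⟩
        rw [hcard]
        have hstep : t (n + 1) ≤ t (max n 1) := by
          rcases le_or_gt 1 n with h | h
          · rw [max_eq_left h]; exact hmono n
          · interval_cases n
            · simp
        linarith
  set N := S.sup id + 1 with hN
  have hfull : S.filter (fun s => s < N) = S := by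
    apply Finset.filter_true_of_mem
    intro s hs
    exact Nat.lt_succ_of_le (Finset.le_sup (f := id) hs)
  have h1 := key N
  rw [hfull] at h1
  have hmaxN : max N 1 = N := by omega
  rw [hmaxN] at h1
  have h2 : t 1 - t N ≤ hup - hlow + ε := by
    have := hbound N
    linarith
  have h3 : (S.card : ℝ) ≤ (hup - hlow + ε) / (κ₂ * ε ^ 2) := by
    rw [le_div_iff₀ hpos]
    nlinarith
  calc (S.card : ℕ) = ⌈(S.card : ℝ)⌉₊ := by simp
    _ ≤ ⌈(hup - hlow + ε) / (κ₂ * ε ^ 2)⌉₊ := Nat.ceil_le_ceil h3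
end

section
/- Suppose the trust-region radius sequence Δ^(k) satisfies: Δ^(1) > 0; Δ^(k+1) = Δ^(k) on successful iterations; Δ^(k+1) = γ Δ^(k) with γ ∈ (0,1) on unsuccessful iterations; and any iteration with Δ^(k) ≤ c·ε (for a fixed constant c > 0) is successful. Then for all k, Δ^(k) ≥ min(Δ^(1), γ c ε), and the total number of unsuccessful iterations (radius reductions) is at most ⌈log(min(Δ^(1), cε)/Δ^(1)) / log γ⌉ + 1, which is O(|log ε|) as ε → 0. -/
/-- Lower bound on the trust-region radius and bound on the number of radius
reductions: if the radius stays the same on successful iterations, shrinks by a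
factor `γ ∈ (0,1)` on unsuccessful ones, and any iteration with `Δ⁽ᵏ⁾ ≤ c ε` is
successful, then `Δ⁽ᵏ⁾ ≥ min(Δ⁽¹⁾, γ c ε)` for all `k ≥ 1`, and the number of
unsuccessful iterations among `1,…,k` is at most
`⌈log(min(Δ⁽¹⁾, cε)/Δ⁽¹⁾)/log γ⌉ + 1`. -/
theorem trust_region_radius_lower_bound
    (Δ : ℕ → ℝ) (succ : ℕ → Prop) [DecidablePred succ]
    (γ c ε : ℝ) (hγ0 : 0 < γ) (hγ1 : γ < 1) (hc : 0 < c) (hε : 0 < ε)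
    (hΔ1 : 0 < Δ 1)
    (hupdate : ∀ k : ℕ, 1 ≤ k →
      (succ k → Δ (k + 1) = Δ k) ∧ (¬ succ k → Δ (k + 1) = γ * Δ k))
    (hsmall : ∀ k : ℕ, 1 ≤ k → Δ k ≤ c * ε → succ k) :
    (∀ k : ℕ, 1 ≤ k → Δ k ≥ min (Δ 1) (γ * c * ε)) ∧
    (∀ k : ℕ, ((Finset.Icc 1 k).filter (fun j => ¬ succ j)).card ≤
      ⌈Real.log (min (Δ 1) (c * ε) / Δ 1) / Real.log γ⌉₊ + 1) := by
  -- notation for the count of unsuccessful iterations in [1,k]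
  set m : ℕ → ℕ := fun k => ((Finset.Icc 1 k).filter (fun j => ¬ succ j)).card with hm
  have hbig : ∀ k : ℕ, 1 ≤ k → ¬ succ k → c * ε < Δ k := by
    intro k hk hns
    by_contra h
    exact hns (hsmall k hk (le_of_not_gt h))
  -- closed form for Δ
  have hform : ∀ k : ℕ, Δ (k + 1) = γ ^ (m k) * Δ 1 := by
    intro k
    induction k with
    | zero => simp [hm]
    | succ n ih =>
      have hins : Finset.Icc 1 (n + 1) = insert (n + 1) (Finset.Icc 1 n) := by
        exact (Finset.insert_Icc_right_eq_Icc_add_one (by omega)).symm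
      have hnot : (n + 1) ∉ Finset.Icc 1 n := by simp
      by_cases hs : succ (n + 1)
      · have h1 := (hupdate (n + 1) (by omega)).1 hs
        have hmeq : m (n + 1) = m n := by
          simp only [hm, hins, Finset.filter_insert, hs, not_true, if_false]
        rw [h1, ih, hmeq]
      · have h1 := (hupdate (n + 1) (by omega)).2 hs
        have hmeq : m (n + 1) = m n + 1 := by
          simp only [hm, hins, Finset.filter_insert, if_pos hs]
          rw [Finset.card_insert_of_notMem (by simp)]
        rw [h1, ih, hmeq, pow_succ]
        ring
  constructor
  · intro k hk
    obtain ⟨n, rfl⟩ : ∃ n, k = n + 1 := ⟨k - 1, by omega⟩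
    clear hk
    induction n with
    | zero => exact min_le_left _ _
    | succ n ih =>
      by_cases hs : succ (n + 1)
      · rw [(hupdate (n + 1) (by omega)).1 hs]; exact ih
      · rw [(hupdate (n + 1) (by omega)).2 hs]
        have := hbig (n + 1) (by omega) hs
        calc min (Δ 1) (γ * c * ε) ≤ γ * c * ε := min_le_right _ _
          _ = γ * (c * ε) := by ring
          _ ≤ γ * Δ (n + 1) := by nlinarith
  · intro k
    have hmk : ((Finset.Icc 1 k).filter (fun j => ¬ succ j)).card = m k := rfl
    rw [hmk]
    by_cases h0 : m k = 0
    · omega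
    -- take the largest unsuccessful index j ≤ k
    have hne : ((Finset.Icc 1 k).filter (fun j => ¬ succ j)).Nonempty := by
      exact Finset.card_pos.mp (Nat.pos_of_ne_zero h0)
    obtain ⟨j, hjmem, hjmax⟩ := Finset.exists_max_image _ id hne
    simp only [Finset.mem_filter, Finset.mem_Icc] at hjmem
    obtain ⟨⟨hj1, hjk⟩, hjns⟩ := hjmem
    -- counts agree: m k = m j
    have hmeq : m k = m j := by
      have hsub : (Finset.Icc 1 k).filter (fun i => ¬ succ i) =
          (Finset.Icc 1 j).filter (fun i => ¬ succ i) := by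
        apply Finset.Subset.antisymm
        · intro i hi
          have hi' := hi
          simp only [Finset.mem_filter, Finset.mem_Icc] at hi' ⊢
          exact ⟨⟨hi'.1.1, hjmax i hi⟩, hi'.2⟩
        · intro i hi
          simp only [Finset.mem_filter, Finset.mem_Icc] at hi ⊢
          exact ⟨⟨hi.1.1, le_trans hi.1.2 hjk⟩, hi.2⟩
      simp [hm, hsub]
    -- j unsuccessful, so Δ j > c ε, and Δ j = γ ^ (m (j-1)) * Δ 1 with m j = m (j-1) + 1
    obtain ⟨p, rfl⟩ : ∃ p, j = p + 1 := ⟨j - 1, by omega⟩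
    have hmj : m (p + 1) = m p + 1 := by
      have hins : Finset.Icc 1 (p + 1) = insert (p + 1) (Finset.Icc 1 p) := by
        exact (Finset.insert_Icc_right_eq_Icc_add_one (by omega)).symm
      simp only [hm, hins, Finset.filter_insert, if_pos hjns]
      rw [Finset.card_insert_of_notMem (by simp)]
    have hΔj : γ ^ (m p) * Δ 1 = Δ (p + 1) := (hform p).symm
    have hgt : c * ε < γ ^ (m p) * Δ 1 := by
      rw [hΔj]; exact hbig (p + 1) hj1 hjns
    -- pass to logs
    have hmin : min (Δ 1) (c * ε) < γ ^ (m p) * Δ 1 :=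
      lt_of_le_of_lt (min_le_right _ _) hgt
    have hminpos : 0 < min (Δ 1) (c * ε) := lt_min hΔ1 (by positivity)
    have hlog : Real.log (min (Δ 1) (c * ε)) < (m p : ℝ) * Real.log γ + Real.log (Δ 1) := by
      have := Real.log_lt_log hminpos hmin
      rwa [Real.log_mul (by positivity) (ne_of_gt hΔ1), Real.log_pow] at this
    have hlogγ : Real.log γ < 0 := Real.log_neg hγ0 hγ1
    have hdiv : (m p : ℝ) < Real.log (min (Δ 1) (c * ε) / Δ 1) / Real.log γ := by
      rw [Real.log_div (ne_of_gt hminpos) (ne_of_gt hΔ1)]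
      rw [lt_div_iff_of_neg hlogγ]
      linarith
    have : m p < ⌈Real.log (min (Δ 1) (c * ε) / Δ 1) / Real.log γ⌉₊ :=
      Nat.lt_ceil.mpr hdiv
    omega
end

section
/- With φ, l_φ, χ as in the trust-region setup, suppose the model-to-function error satisfies |φ(x+d,t) - l_φ(x,t,d)| ≤ C‖d‖² with C = L_g + L_J/2, and suppose χ(x,t) ≥ ε and the step d achieves l_φ(x,t,0) - l_φ(x,t,d) ≥ min(Δ,1)·χ(x,t) with ‖d‖ ≤ Δ. If Δ ≤ min(1, (1-η)ε/C), then the ratio ρ = (φ(x,t) - φ(x+d,t)) / (l_φ(x,t,0) - l_φ(x,t,d)) satisfies ρ ≥ η, assuming the denominator is positive. -/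
/-- Acceptance lemma: with model error `|φ(x+d,t) - l_φ(x,t,d)| ≤ C‖d‖²`
(`C = L_g + L_J/2`), criticality `χ(x,t) ≥ ε`, a step achieving
`l_φ(x,t,0) - l_φ(x,t,d) ≥ min(Δ,1)·χ(x,t)` with `‖d‖ ≤ Δ`, and radius
`Δ ≤ min(1, (1-η)ε/C)`, the trust-region ratio satisfies `ρ ≥ η`. Here
`φx = φ(x,t) = l_φ(x,t,0)`, `φxd = φ(x+d,t)`, `ld = l_φ(x,t,d)`, and `dnorm = ‖d‖`. -/
theorem trust_region_acceptance
    (φx φxd ld χ ε η Δ C dnorm Lg LJ : ℝ)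
    (hC : C = Lg + LJ / 2) (hCpos : 0 < C)
    (hη0 : 0 < η) (hη1 : η < 1) (hε : 0 < ε) (hΔpos : 0 < Δ)
    (hd0 : 0 ≤ dnorm) (hdΔ : dnorm ≤ Δ)
    (herr : |φxd - ld| ≤ C * dnorm ^ 2)
    (hχ : χ ≥ ε)
    (hred : φx - ld ≥ min Δ 1 * χ)
    (hΔ : Δ ≤ min 1 ((1 - η) * ε / C))
    (hden : 0 < φx - ld) :
    (φx - φxd) / (φx - ld) ≥ η := by
  have hΔ1 : Δ ≤ 1 := le_trans hΔ (min_le_left _ _)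
  have hΔ2 : Δ ≤ (1 - η) * ε / C := le_trans hΔ (min_le_right _ _)
  have hCΔ : C * Δ ≤ (1 - η) * ε := by
    rw [le_div_iff₀ hCpos] at hΔ2; linarith [hΔ2]
  have hmin : min Δ 1 = Δ := min_eq_left hΔ1
  rw [hmin] at hred
  have hden2 : φx - ld ≥ Δ * ε := le_trans (by nlinarith) hred
  have h1 := (abs_le.mp herr).2
  have h2 : C * dnorm ^ 2 ≤ C * Δ ^ 2 :=
    mul_le_mul_of_nonneg_left (by nlinarith : dnorm ^ 2 ≤ Δ ^ 2) hCpos.le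
  rw [ge_iff_le, le_div_iff₀ hden]
  nlinarith [mul_le_mul_of_nonneg_right hCΔ hΔpos.le, hden2, hη1]
end
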